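/- The signal covariance matrix depends only on the components of the beamformer in the channel subspace: for any N-stream beamformer w = (w_1, …, w_N) with each w_n ∈ L²(μ; ℂ), one has Q(w∥) = Q(w), where w∥ = (P_K w_1, …, P_K w_N) is the streamwise orthogonal projection of w onto K. -/

import Mathlib

/-!
For almost every `r` the section `conj (h r ·)` lies in `L²(μ)` (Fubini–Tonelli applied to
`|h|²`), and then `e_w(r) = ⟪conj (h r ·), w⟫` is an inner product with a vector of `K`, which is
unchanged when `w` is replaced by `P_K w`. Hence the integrands defining `Q(w∥)` and `Q(w)` agree
`ν`-almost everywhere.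
-/

open MeasureTheory ComplexConjugate

noncomputable section

variable {α β : Type*} [MeasurableSpace α] [MeasurableSpace β]

/-- Effective received signal `e_w(r) = ∫_{S_B} h(r,s) w(s) dμ(s)`. -/
def eSig (h : β → α → ℂ) (μ : Measure α) (w : Lp ℂ 2 μ) (r : β) : ℂ :=
  ∫ s, h r s * (w : α → ℂ) s ∂μ

/-- The closed linear span `K` of the conjugated channel sections
`{s ↦ conj (h r s) : r ∈ S_U, h(r,·) ∈ L²(μ)}` in `L²(μ; ℂ)`. -/
def chanSub (h : β → α → ℂ) (μ : Measure α) : Submodule ℂ (Lp ℂ 2 μ) :=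
  (Submodule.span ℂ {f : Lp ℂ 2 μ |
    ∃ r : β, ∃ hr : MemLp (fun s => conj (h r s)) 2 μ,
      f = hr.toLp (fun s => conj (h r s))}).topologicalClosure

instance (h : β → α → ℂ) (μ : Measure α) : CompleteSpace (chanSub h μ) :=
  (Submodule.isClosed_topologicalClosure _).completeSpace_coe

/-- The orthogonal projection `P_K` of `L²(μ; ℂ)` onto the channel subspace `K`. -/
def projK (h : β → α → ℂ) (μ : Measure α) (w : Lp ℂ 2 μ) : Lp ℂ 2 μ :=
  (Submodule.orthogonalProjectionOnto (chanSub h μ) w : Lp ℂ 2 μ)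

/-- Signal covariance matrix `Q(w)_{mn} = ∫ conj(e_{w_m}(r)) ⬝ e_{w_n}(r) dν(r)`. -/
def covQ (h : β → α → ℂ) (μ : Measure α) (ν : Measure β) {N : ℕ}
    (w : Fin N → Lp ℂ 2 μ) : Matrix (Fin N) (Fin N) ℂ :=
  Matrix.of fun m n => ∫ r, conj (eSig h μ (w m) r) * eSig h μ (w n) r ∂ν

theorem MeasureTheory.MemLp.ae_memLp_prodMk_left {X Y E : Type*} [MeasurableSpace X]
    [MeasurableSpace Y] [NormedAddCommGroup E] {μ : Measure X} {ν : Measure Y} [SFinite μ]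
    [SFinite ν] {p : ENNReal} {f : X × Y → E} (hf : MemLp f p (μ.prod ν)) (hp0 : p ≠ 0)
    (hp : p ≠ ⊤) :
    ∀ᵐ x ∂μ, MemLp (fun y => f (x, y)) p ν := by
  filter_upwards [(hf.integrable_norm_rpow hp0 hp).prod_right_ae, hf.1.prodMk_left]
    with x hx_int hx_meas
  exact (integrable_norm_rpow_iff hx_meas hp0 hp).mp hx_int

theorem eSig_eq_inner_toLp {X Y : Type*} [MeasurableSpace X] (h : Y → X → ℂ) (μ : Measure X)
    (w : Lp ℂ 2 μ) {r : Y} (hr : MemLp (fun s => conj (h r s)) 2 μ) :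
    eSig h μ w r = inner ℂ (hr.toLp fun s => conj (h r s)) w := by
  rw [L2.inner_def]
  refine integral_congr_ae ?_
  filter_upwards [hr.coeFn_toLp] with s hs
  rw [RCLike.inner_apply, hs, Complex.conj_conj, mul_comm]

theorem toLp_conj_mem_chanSub {X Y : Type*} [MeasurableSpace X] (h : Y → X → ℂ)
    (μ : Measure X) {r : Y} (hr : MemLp (fun s => conj (h r s)) 2 μ) :
    hr.toLp (fun s => conj (h r s)) ∈ chanSub h μ :=
  Submodule.le_topologicalClosure _ (Submodule.subset_span ⟨r, hr, rfl⟩)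

theorem eSig_projK {X Y : Type*} [MeasurableSpace X] (h : Y → X → ℂ) (μ : Measure X)
    (w : Lp ℂ 2 μ) {r : Y} (hr : MemLp (fun s => conj (h r s)) 2 μ) :
    eSig h μ (projK h μ w) r = eSig h μ w r := by
  rw [eSig_eq_inner_toLp h μ _ hr, eSig_eq_inner_toLp h μ _ hr, projK]
  exact Submodule.inner_orthogonalProjectionOnto_eq_of_mem_left
    (⟨_, toLp_conj_mem_chanSub h μ hr⟩ : chanSub h μ) w

theorem covQ_projK_eq_general
    (μ : Measure α) (ν : Measure β) [SigmaFinite μ] [SigmaFinite ν]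
    (h : β → α → ℂ)
    (hL2 : MemLp (Function.uncurry h) 2 (ν.prod μ))
    {N : ℕ} (w : Fin N → Lp ℂ 2 μ) :
    covQ h μ ν (fun n => projK h μ (w n)) = covQ h μ ν w := by
  have h_sections : ∀ᵐ r ∂ν, MemLp (fun s => conj (h r s)) 2 μ := by
    filter_upwards [hL2.ae_memLp_prodMk_left two_ne_zero ENNReal.ofNat_ne_top] with r hr
    exact hr.star
  ext m n
  refine integral_congr_ae ?_
  filter_upwards [h_sections] with r hr
  rw [eSig_projK h μ _ hr, eSig_projK h μ _ hr]

/-- The signal covariance matrix depends only on the components of the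
beamformer in the channel subspace: for any `N`-stream beamformer `w = (w_1, …, w_N)` with
each `w_n ∈ L²(μ; ℂ)`, one has `Q(w∥) = Q(w)`, where `w∥ = (P_K w_1, …, P_K w_N)` is the
streamwise orthogonal projection of `w` onto `K`. -/
theorem covQ_projK_eq
    (μ : Measure α) (ν : Measure β) [SigmaFinite μ] [SigmaFinite ν]
    (h : β → α → ℂ)
    (hmeas : Measurable (Function.uncurry h))
    (hL2 : MemLp (Function.uncurry h) 2 (ν.prod μ))
    {N : ℕ} (w : Fin N → Lp ℂ 2 μ) :
    covQ h μ ν (fun n => projK h μ (w n)) = covQ h μ ν w :=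
  covQ_projK_eq_general μ ν h hL2 w

end
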